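/- arXiv:1707.02678 — 2 statements merged into one kernel-verified Lean document; each statement's English description precedes it below -/
import Mathlib

section
/- Let (A, B) be a complete hereditary cotorsion pair in the category of left R-modules. An R-module M is a Gorenstein B-module if and only if Ext^i_R(X, M) = 0 for all i ≥ 1 and all X ∈ A ∩ B, and there exists an exact sequence ⋯ → B₁ → B₀ → M → 0 with each Bᵢ ∈ B that remains exact after applying Hom_R(X, −) for every X ∈ A ∩ B. -/
open CategoryTheory

universe u

variable {R : Type u} [Ring R]

/-- `Ext^i(X, M)` is trivial. -/
def ExtVanishes (R : Type u) [Ring R] (i : ℕ) (X M : ModuleCat.{u} R) : Prop :=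
  Subsingleton (((Ext ℤ (ModuleCat.{u} R) i).obj (Opposite.op X)).obj M)

/-- `0 → X → Y → Z → 0` is a short exact sequence of `R`-modules. -/
def IsShortExact {X Y Z : ModuleCat.{u} R} (f : X →ₗ[R] Y) (g : Y →ₗ[R] Z) : Prop :=
  Function.Injective f ∧ Function.Surjective g ∧ Function.Exact f g

/-- `(𝒜, ℬ)` is a cotorsion pair in `Mod R`. -/
structure IsCotorsionPair (R : Type u) [Ring R] (𝒜 ℬ : Set (ModuleCat.{u} R)) : Prop where
  mem_left : ∀ M, M ∈ 𝒜 ↔ ∀ N ∈ ℬ, ExtVanishes R 1 M N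
  mem_right : ∀ N, N ∈ ℬ ↔ ∀ M ∈ 𝒜, ExtVanishes R 1 M N

/-- The cotorsion pair `(𝒜, ℬ)` is hereditary. -/
def IsHereditary (R : Type u) [Ring R] (𝒜 ℬ : Set (ModuleCat.{u} R)) : Prop :=
  ∀ i, 1 ≤ i → ∀ M ∈ 𝒜, ∀ N ∈ ℬ, ExtVanishes R i M N

/-- The cotorsion pair `(𝒜, ℬ)` is complete: every module has a special `ℬ`-preenvelope
and a special `𝒜`-precover. -/
def IsCompletePair (R : Type u) [Ring R] (𝒜 ℬ : Set (ModuleCat.{u} R)) : Prop :=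
  (∀ M : ModuleCat.{u} R, ∃ (N C : ModuleCat.{u} R) (f : M →ₗ[R] N) (g : N →ₗ[R] C),
      N ∈ ℬ ∧ C ∈ 𝒜 ∧ IsShortExact f g) ∧
  (∀ M : ModuleCat.{u} R, ∃ (K A' : ModuleCat.{u} R) (f : K →ₗ[R] A') (g : A' →ₗ[R] M),
      K ∈ ℬ ∧ A' ∈ 𝒜 ∧ IsShortExact f g)

/-- `M` is a Gorenstein `ℬ`-module with respect to the cotorsion pair `(𝒜, ℬ)`:
`Ext^i(L, M) = 0` for all `i ≥ 1` and `L ∈ 𝒜 ∩ ℬ`, and `M` admits an exact left resolution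
`⋯ → X₁ → X₀ → M → 0` by modules in `𝒜 ∩ ℬ` which stays exact under `Hom(L, -)` for
every `L ∈ 𝒜 ∩ ℬ`. -/
def IsGorenstein (𝒜 ℬ : Set (ModuleCat.{u} R)) (M : ModuleCat.{u} R) : Prop :=
  (∀ i, 1 ≤ i → ∀ L ∈ 𝒜 ∩ ℬ, ExtVanishes R i L M) ∧
  ∃ (X : ℕ → ModuleCat.{u} R) (d : ∀ n, X (n + 1) →ₗ[R] X n) (ε : X 0 →ₗ[R] M),
    (∀ n, X n ∈ 𝒜 ∩ ℬ) ∧ Function.Surjective ε ∧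
    Function.Exact (d 0) ε ∧ (∀ n, Function.Exact (d (n + 1)) (d n)) ∧
    ∀ L ∈ 𝒜 ∩ ℬ,
      Function.Surjective (fun h : L →ₗ[R] X 0 => ε.comp h) ∧
      Function.Exact (fun h : L →ₗ[R] X 1 => (d 0).comp h)
        (fun h : L →ₗ[R] X 0 => ε.comp h) ∧
      ∀ n, Function.Exact (fun h : L →ₗ[R] X (n + 2) => (d (n + 1)).comp h)
        (fun h : L →ₗ[R] X (n + 1) => (d n).comp h)

/-- `M` has a coresolution `0 → M → X₀ → X₁ → ⋯ → Xₙ → 0` of length at most `n`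
by modules in `𝒞`; i.e. the `𝒞`-injective dimension of `M` is at most `n`. -/
def CoresolutionDimLE (𝒞 : Set (ModuleCat.{u} R)) (M : ModuleCat.{u} R) (n : ℕ) : Prop :=
  ∃ (X : ℕ → ModuleCat.{u} R) (ε : M →ₗ[R] X 0) (d : ∀ k, X k →ₗ[R] X (k + 1)),
    (∀ k, X k ∈ 𝒞) ∧ Function.Injective ε ∧ Function.Exact ε (d 0) ∧
    (∀ k, Function.Exact (d k) (d (k + 1))) ∧ ∀ k, n < k → Subsingleton (X k)

/-- The `𝒞`-injective dimension of `M`, as an element of `ℕ∞`. -/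
noncomputable def coresDim (𝒞 : Set (ModuleCat.{u} R)) (M : ModuleCat.{u} R) : ℕ∞ :=
  sInf {k : ℕ∞ | ∃ m : ℕ, k = (m : ℕ∞) ∧ CoresolutionDimLE 𝒞 M m}


open Limits in
section
noncomputable section

namespace GorAux

/-- Translation of Ext vanishing into concrete exactness of the Hom complex. -/
lemma extVanishes_iff (L Y : ModuleCat.{u} R) (P : ProjectiveResolution L) (n : ℕ) :
    ExtVanishes R (n+1) L Y ↔
      ∀ v : (P.complex.X (n+1) : Type u) →ₗ[R] Y,
        v ∘ₗ ((P.complex.d (n+2) (n+1)).hom : (P.complex.X (n+2) : Type u) →ₗ[R] P.complex.X (n+1)) = 0 →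
        ∃ u : (P.complex.X n : Type u) →ₗ[R] Y,
          u ∘ₗ ((P.complex.d (n+1) n).hom : (P.complex.X (n+1) : Type u) →ₗ[R] P.complex.X n) = v := by
  set K := P.complex.linearYonedaObj ℤ Y with hK
  have e := P.isoExt (R := ℤ) (n+1) Y
  have h1 : ExtVanishes R (n+1) L Y ↔ Subsingleton (K.homology (n+1)) :=
    ((forget (ModuleCat ℤ)).mapIso e).toEquiv.subsingleton_congr
  have h2 : Subsingleton (K.homology (n+1)) ↔ IsZero (K.homology (n+1)) := by
    constructor
    · intro h; exact ModuleCat.isZero_of_subsingleton _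
    · intro h
      have hid : (𝟙 (K.homology (n+1))) = 0 := h.eq_of_src _ _
      constructor
      intro a b
      have hz : ∀ x : K.homology (n+1), x = 0 := fun x =>
        calc x = (𝟙 (K.homology (n+1))) x := rfl
          _ = (0 : K.homology (n+1) ⟶ K.homology (n+1)) x := by rw [hid]
          _ = 0 := rfl
      rw [hz a, hz b]
  have h3 : IsZero (K.homology (n+1)) ↔ K.ExactAt (n+1) :=
    (HomologicalComplex.exactAt_iff_isZero_homology _ _).symm
  have h4 : K.ExactAt (n+1) ↔ (K.sc' n (n+1) (n+2)).Exact :=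
    HomologicalComplex.exactAt_iff' _ n (n+1) (n+2) (by simp) (by simp)
  have h5 := (K.sc' n (n+1) (n+2)).moduleCat_exact_iff
  rw [h1, h2, h3, h4, h5]
  constructor
  · intro H v hv
    obtain ⟨x1, hx1⟩ := H (ModuleCat.ofHom v) (by
      change P.complex.d (n+2) (n+1) ≫ ModuleCat.ofHom v = 0
      ext y
      simpa using LinearMap.congr_fun hv y)
    refine ⟨x1.hom, ?_⟩
    have e : P.complex.d (n+1) n ≫ x1 = ModuleCat.ofHom v := hx1
    ext y
    exact congrArg (fun t => t.hom y) e
  · intro H x hx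
    have e : P.complex.d (n+2) (n+1) ≫ x = 0 := hx
    obtain ⟨u, hu⟩ := H x.hom (by
      ext y
      exact congrArg (fun t => t.hom y) e)
    refine ⟨ModuleCat.ofHom u, ?_⟩
    change P.complex.d (n+1) n ≫ ModuleCat.ofHom u = x
    ext y
    simpa using LinearMap.congr_fun hu y

/-- Factor a map through a surjection whose kernel it kills. -/
lemma exists_factor {X L Y : ModuleCat.{u} R} (π : X →ₗ[R] L) (hπ : Function.Surjective π)
    (u : X →ₗ[R] Y) (h : ∀ x, π x = 0 → u x = 0) :
    ∃ ψ : L →ₗ[R] Y, ψ ∘ₗ π = u := by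
  have hle : LinearMap.ker π ≤ LinearMap.ker u := fun x hx => h x hx
  set e := π.quotKerEquivOfSurjective hπ with he
  refine ⟨((LinearMap.ker π).liftQ u hle) ∘ₗ (e.symm : L →ₗ[R] _), ?_⟩
  ext x
  have h1 : e.symm (π x) = Submodule.Quotient.mk x := by
    apply e.injective
    rw [e.apply_symm_apply]
    rfl
  simp [h1]

/-- Corestrict a map landing in the image of an injection. -/
lemma exists_corestrict {K X W : ModuleCat.{u} R} (i : K →ₗ[R] X) (hi : Function.Injective i)
    (u : W →ₗ[R] X) (h : ∀ w, ∃ k, i k = u w) :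
    ∃ v : W →ₗ[R] K, i ∘ₗ v = u := by
  have hle : ∀ w, u w ∈ LinearMap.range i := fun w => (h w).imp (fun k hk => hk)
  refine ⟨(LinearEquiv.ofInjective i hi).symm.toLinearMap ∘ₗ u.codRestrict _ hle, ?_⟩
  ext w
  have : ∀ z : LinearMap.range i, i ((LinearEquiv.ofInjective i hi).symm z) = z := by
    intro z
    conv_rhs => rw [← (LinearEquiv.ofInjective i hi).apply_symm_apply z]
    rfl
  simpa using this ⟨u w, hle w⟩

/-- Lift along a surjection out of a projective module. -/
lemma exists_lift {X Y Z : ModuleCat.{u} R} [Projective X] (p : Y →ₗ[R] Z)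
    (hp : Function.Surjective p) (f : X →ₗ[R] Z) :
    ∃ g : X →ₗ[R] Y, p ∘ₗ g = f := by
  let p' : Y ⟶ Z := ModuleCat.ofHom p
  let f' : X ⟶ Z := ModuleCat.ofHom f
  have : Epi p' := (ModuleCat.epi_iff_surjective _).2 hp
  exact ⟨(Projective.factorThru f' p').hom,
    congrArg (fun (h : X ⟶ Z) => h.hom) (Projective.factorThru_comp f' p')⟩

end GorAux

namespace GorAux

lemma cancel_surj {X L Y : ModuleCat.{u} R} (π : X →ₗ[R] L) (hπ : Function.Surjective π)
    {f g : L →ₗ[R] Y} (h : f ∘ₗ π = g ∘ₗ π) : f = g := by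
  ext x
  obtain ⟨y, rfl⟩ := hπ x
  exact congrArg (fun t => t y) h ▸ LinearMap.congr_fun h y

section Chases

variable (L : ModuleCat.{u} R) (P : ProjectiveResolution L)

lemma pi_surjective : Function.Surjective ((P.π.f 0).hom : (P.complex.X 0 : Type u) →ₗ[R] L) :=
  (ModuleCat.epi_iff_surjective (P.π.f 0)).1 inferInstance

lemma exact_zero : ∀ x : (P.complex.X 0 : Type u), P.π.f 0 x = 0 →
    ∃ y : (P.complex.X 1 : Type u), P.complex.d 1 0 y = x :=
  (ShortComplex.mk (P.complex.d 1 0) (P.π.f 0) P.complex_d_comp_π_f_zero).moduleCat_exact_iff.1 P.exact₀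

lemma exact_succ' (n : ℕ) : ∀ x : (P.complex.X (n+1) : Type u), P.complex.d (n+1) n x = 0 →
    ∃ y : (P.complex.X (n+2) : Type u), P.complex.d (n+2) (n+1) y = x :=
  (ShortComplex.mk _ _ (P.complex.d_comp_d (n+2) (n+1) n)).moduleCat_exact_iff.1 (P.exact_succ n)

lemma d_comp_pi : ∀ y : (P.complex.X 1 : Type u), P.π.f 0 (P.complex.d 1 0 y) = 0 := by
  intro y
  have := P.complex_d_comp_π_f_zero
  exact LinearMap.congr_fun (congrArg (fun (h : P.complex.X 1 ⟶ _) => h.hom) this) y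

lemma d_comp_d (n : ℕ) : ∀ y : (P.complex.X (n+2) : Type u),
    P.complex.d (n+1) n (P.complex.d (n+2) (n+1) y) = 0 := by
  intro y
  have := P.complex.d_comp_d (n+2) (n+1) n
  exact LinearMap.congr_fun (congrArg (fun (h : P.complex.X (n+2) ⟶ _) => h.hom) this) y

end Chases

/-- E2: lifting along a surjection whose kernel has vanishing Ext¹. -/
lemma lift_of_ext {L Y₁ Y₂ Y₃ : ModuleCat.{u} R} (i : Y₁ →ₗ[R] Y₂) (p : Y₂ →ₗ[R] Y₃)
    (hs : IsShortExact i p) (h1 : ExtVanishes R 1 L Y₁) (φ : L →ₗ[R] Y₃) :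
    ∃ ψ : L →ₗ[R] Y₂, p ∘ₗ ψ = φ := by
  obtain ⟨hi, hp, hex⟩ := hs
  obtain ⟨P⟩ := (HasProjectiveResolution.out (Z := L))
  haveI := P.projective 0
  set π : (P.complex.X 0 : Type u) →ₗ[R] L := (P.π.f 0).hom with hπdef
  set δ₀ : (P.complex.X 1 : Type u) →ₗ[R] P.complex.X 0 := (P.complex.d 1 0).hom with hδ₀
  set δ₁ : (P.complex.X 2 : Type u) →ₗ[R] P.complex.X 1 := (P.complex.d 2 1).hom with hδ₁
  obtain ⟨u, hu⟩ := exists_lift p hp (φ ∘ₗ π)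
  obtain ⟨v, hv⟩ := exists_corestrict i hi (u ∘ₗ δ₀) (fun w => by
    refine (hex _).1 ?_
    have : p (u (δ₀ w)) = φ (π (δ₀ w)) := LinearMap.congr_fun hu (δ₀ w)
    rw [LinearMap.comp_apply, this, show π (δ₀ w) = 0 from d_comp_pi L P w, map_zero])
  have hvcoc : v ∘ₗ δ₁ = 0 := by
    ext x
    apply hi
    have h1 : i (v (δ₁ x)) = u (δ₀ (δ₁ x)) := LinearMap.congr_fun hv (δ₁ x)
    have h2 : δ₀ (δ₁ x) = 0 := d_comp_d L P 0 x
    simp [h1, h2]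
  obtain ⟨w, hw⟩ := (extVanishes_iff L Y₁ P 0).1 h1 v hvcoc
  obtain ⟨ψ, hψ⟩ := exists_factor π (pi_surjective L P) (u - i ∘ₗ w) (fun x hx => by
    obtain ⟨y, rfl⟩ := exact_zero L P x hx
    have h1 : w (δ₀ y) = v y := LinearMap.congr_fun hw y
    have h2 : i (v y) = u (δ₀ y) := LinearMap.congr_fun hv y
    show (u - i ∘ₗ w) (δ₀ y) = 0
    simp [h1, h2])
  refine ⟨ψ, cancel_surj π (pi_surjective L P) ?_⟩
  ext x
  have h1 : ψ (π x) = u x - i (w x) := LinearMap.congr_fun hψ x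
  have h2 : p (u x) = φ (π x) := LinearMap.congr_fun hu x
  have h3 : p (i (w x)) = 0 := (hex (i (w x))).2 ⟨w x, rfl⟩
  simp [h1, h2, h3]

end GorAux

namespace GorAux

/-- E1: Ext¹ vanishing is closed under extensions (in the second variable). -/
lemma extVanishes_of_shortExact {L Y₁ Y₂ Y₃ : ModuleCat.{u} R} (i : Y₁ →ₗ[R] Y₂)
    (p : Y₂ →ₗ[R] Y₃) (hs : IsShortExact i p) (h1 : ExtVanishes R 1 L Y₁)
    (h3 : ExtVanishes R 1 L Y₃) : ExtVanishes R 1 L Y₂ := by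
  obtain ⟨hi, hp, hex⟩ := hs
  obtain ⟨P⟩ := (HasProjectiveResolution.out (Z := L))
  haveI := P.projective 0
  rw [extVanishes_iff L Y₂ P 0]
  set δ₀ : (P.complex.X 1 : Type u) →ₗ[R] P.complex.X 0 := (P.complex.d 1 0).hom with hδ₀
  set δ₁ : (P.complex.X 2 : Type u) →ₗ[R] P.complex.X 1 := (P.complex.d 2 1).hom with hδ₁
  intro f hf
  have hf3 : (p ∘ₗ f) ∘ₗ δ₁ = 0 := by
    ext x
    have h := LinearMap.congr_fun hf x
    simp only [LinearMap.comp_apply, LinearMap.zero_apply] at h ⊢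
    rw [h, map_zero]
  obtain ⟨g₃, hg₃⟩ := (extVanishes_iff L Y₃ P 0).1 h3 (p ∘ₗ f) hf3
  obtain ⟨ghat, hghat⟩ := exists_lift p hp g₃
  obtain ⟨h, hh⟩ := exists_corestrict i hi (f - ghat ∘ₗ δ₀) (fun x => by
    refine (hex _).1 ?_
    have e1 : g₃ (δ₀ x) = p (f x) := LinearMap.congr_fun hg₃ x
    have e2 : p (ghat (δ₀ x)) = g₃ (δ₀ x) := LinearMap.congr_fun hghat (δ₀ x)
    simp [e1, e2])
  have hhcoc : h ∘ₗ δ₁ = 0 := by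
    ext x
    apply hi
    have e1 : i (h (δ₁ x)) = f (δ₁ x) - ghat (δ₀ (δ₁ x)) := LinearMap.congr_fun hh (δ₁ x)
    have e2 : f (δ₁ x) = 0 := LinearMap.congr_fun hf x
    have e3 : δ₀ (δ₁ x) = 0 := d_comp_d L P 0 x
    simp [e1, e2, e3]
  obtain ⟨k, hk⟩ := (extVanishes_iff L Y₁ P 0).1 h1 h hhcoc
  refine ⟨ghat + i ∘ₗ k, ?_⟩
  ext x
  have e1 : k (δ₀ x) = h x := LinearMap.congr_fun hk x
  have e2 : i (h x) = f x - ghat (δ₀ x) := LinearMap.congr_fun hh x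
  simp [e1, e2]

/-- E3: first kernel-shift of Ext vanishing. -/
lemma extVanishes_one_ker {L N' A N : ModuleCat.{u} R} (i : N' →ₗ[R] A) (p : A →ₗ[R] N)
    (hs : IsShortExact i p) (hsurj : ∀ φ : L →ₗ[R] N, ∃ ψ : L →ₗ[R] A, p ∘ₗ ψ = φ)
    (hA : ExtVanishes R 1 L A) : ExtVanishes R 1 L N' := by
  obtain ⟨hi, hp, hex⟩ := hs
  obtain ⟨P⟩ := (HasProjectiveResolution.out (Z := L))
  rw [extVanishes_iff L N' P 0]
  set π : (P.complex.X 0 : Type u) →ₗ[R] L := (P.π.f 0).hom with hπdef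
  set δ₀ : (P.complex.X 1 : Type u) →ₗ[R] P.complex.X 0 := (P.complex.d 1 0).hom with hδ₀
  set δ₁ : (P.complex.X 2 : Type u) →ₗ[R] P.complex.X 1 := (P.complex.d 2 1).hom with hδ₁
  intro v hv
  have hcoc : (i ∘ₗ v) ∘ₗ δ₁ = 0 := by
    ext x
    have h := LinearMap.congr_fun hv x
    simp only [LinearMap.comp_apply, LinearMap.zero_apply] at h ⊢
    rw [h, map_zero]
  obtain ⟨u, hu⟩ := (extVanishes_iff L A P 0).1 hA (i ∘ₗ v) hcoc
  obtain ⟨φ, hφ⟩ := exists_factor π (pi_surjective L P) (p ∘ₗ u) (fun x hx => by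
    obtain ⟨y, rfl⟩ := exact_zero L P x hx
    have e1 : u (δ₀ y) = i (v y) := LinearMap.congr_fun hu y
    have e2 : p (i (v y)) = 0 := (hex (i (v y))).2 ⟨v y, rfl⟩
    show (p ∘ₗ u) (δ₀ y) = 0
    simp [e1, e2])
  obtain ⟨ψ, hψ⟩ := hsurj φ
  obtain ⟨w, hw⟩ := exists_corestrict i hi (u - ψ ∘ₗ π) (fun x => by
    refine (hex _).1 ?_
    have e1 : φ (π x) = p (u x) := LinearMap.congr_fun hφ x
    have e2 : p (ψ (π x)) = φ (π x) := LinearMap.congr_fun hψ (π x)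
    simp [e1, e2])
  refine ⟨w, ?_⟩
  ext x
  apply hi
  have e1 : i (w (δ₀ x)) = u (δ₀ x) - ψ (π (δ₀ x)) := LinearMap.congr_fun hw (δ₀ x)
  have e2 : u (δ₀ x) = i (v x) := LinearMap.congr_fun hu x
  have e3 : π (δ₀ x) = 0 := d_comp_pi L P x
  simp [e1, e2, e3]

/-- E4: higher kernel-shift of Ext vanishing. -/
lemma extVanishes_succ_ker {L N' A N : ModuleCat.{u} R} (i : N' →ₗ[R] A) (p : A →ₗ[R] N)
    (hs : IsShortExact i p) (j : ℕ) (hN : ExtVanishes R (j+1) L N)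
    (hA : ExtVanishes R (j+2) L A) : ExtVanishes R (j+2) L N' := by
  obtain ⟨hi, hp, hex⟩ := hs
  obtain ⟨P⟩ := (HasProjectiveResolution.out (Z := L))
  haveI := P.projective j
  rw [extVanishes_iff L N' P (j+1)]
  set δj : (P.complex.X (j+1) : Type u) →ₗ[R] P.complex.X j := (P.complex.d (j+1) j).hom with hδj
  set δj1 : (P.complex.X (j+2) : Type u) →ₗ[R] P.complex.X (j+1) := (P.complex.d (j+2) (j+1)).hom
    with hδj1
  set δj2 : (P.complex.X (j+3) : Type u) →ₗ[R] P.complex.X (j+2) := (P.complex.d (j+3) (j+2)).hom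
    with hδj2
  intro v hv
  have hcoc : (i ∘ₗ v) ∘ₗ δj2 = 0 := by
    ext x
    have h := LinearMap.congr_fun hv x
    simp only [LinearMap.comp_apply, LinearMap.zero_apply] at h ⊢
    rw [h, map_zero]
  obtain ⟨u, hu⟩ := (extVanishes_iff L A P (j+1)).1 hA (i ∘ₗ v) hcoc
  have hpu : (p ∘ₗ u) ∘ₗ δj1 = 0 := by
    ext x
    have e1 : u (δj1 x) = i (v x) := LinearMap.congr_fun hu x
    have e2 : p (i (v x)) = 0 := (hex (i (v x))).2 ⟨v x, rfl⟩
    simp [e1, e2]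
  obtain ⟨φ, hφ⟩ := (extVanishes_iff L N P j).1 hN (p ∘ₗ u) hpu
  obtain ⟨ψ, hψ⟩ := exists_lift p hp φ
  obtain ⟨w, hw⟩ := exists_corestrict i hi (u - ψ ∘ₗ δj) (fun x => by
    refine (hex _).1 ?_
    have e1 : φ (δj x) = p (u x) := LinearMap.congr_fun hφ x
    have e2 : p (ψ (δj x)) = φ (δj x) := LinearMap.congr_fun hψ (δj x)
    simp [e1, e2])
  refine ⟨w, ?_⟩
  ext x
  apply hi
  have e1 : i (w (δj1 x)) = u (δj1 x) - ψ (δj (δj1 x)) := LinearMap.congr_fun hw (δj1 x)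
  have e2 : u (δj1 x) = i (v x) := LinearMap.congr_fun hu x
  have e3 : δj (δj1 x) = 0 := d_comp_d L P j x
  simp [e1, e2, e3]

end GorAux

namespace GorAux

/-- The recursion invariant: Ext-vanishing plus a `Hom(𝒜∩ℬ,-)`-exact `ℬ`-resolution. -/
def Good (𝒜 ℬ : Set (ModuleCat.{u} R)) (N : ModuleCat.{u} R) : Prop :=
  (∀ i, 1 ≤ i → ∀ L ∈ 𝒜 ∩ ℬ, ExtVanishes R i L N) ∧
  ∃ (X : ℕ → ModuleCat.{u} R) (d : ∀ n, X (n + 1) →ₗ[R] X n) (ε : X 0 →ₗ[R] N),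
    (∀ n, X n ∈ ℬ) ∧ Function.Surjective ε ∧
    Function.Exact (d 0) ε ∧ (∀ n, Function.Exact (d (n + 1)) (d n)) ∧
    ∀ L ∈ 𝒜 ∩ ℬ,
      Function.Surjective (fun h : L →ₗ[R] X 0 => ε.comp h) ∧
      Function.Exact (fun h : L →ₗ[R] X 1 => (d 0).comp h)
        (fun h : L →ₗ[R] X 0 => ε.comp h) ∧
      ∀ n, Function.Exact (fun h : L →ₗ[R] X (n + 2) => (d (n + 1)).comp h)
        (fun h : L →ₗ[R] X (n + 1) => (d n).comp h)

lemma memB_of_ses {𝒜 ℬ : Set (ModuleCat.{u} R)} (hcp : IsCotorsionPair R 𝒜 ℬ)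
    {K E B' : ModuleCat.{u} R} (f : K →ₗ[R] E) (g : E →ₗ[R] B') (hs : IsShortExact f g)
    (hK : K ∈ ℬ) (hB : B' ∈ ℬ) : E ∈ ℬ :=
  (hcp.mem_right E).2 fun L hL => extVanishes_of_shortExact f g hs
    ((hcp.mem_right K).1 hK L hL) ((hcp.mem_right B').1 hB L hL)

lemma step {𝒜 ℬ : Set (ModuleCat.{u} R)} (hcp : IsCotorsionPair R 𝒜 ℬ)
    (hher : IsHereditary R 𝒜 ℬ) (hcom : IsCompletePair R 𝒜 ℬ)
    (N : ModuleCat.{u} R) (hN : Good 𝒜 ℬ N) :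
    ∃ (A : ModuleCat.{u} R) (πA : (A : Type u) →ₗ[R] N),
      A ∈ 𝒜 ∩ ℬ ∧ Function.Surjective πA ∧
      (∀ L ∈ 𝒜 ∩ ℬ, ∀ φ : (L : Type u) →ₗ[R] N, ∃ ψ : (L : Type u) →ₗ[R] A, πA ∘ₗ ψ = φ) ∧
      Good 𝒜 ℬ (ModuleCat.of R (LinearMap.ker πA)) := by
  obtain ⟨hext, B, d, ε, hBmem, hεs, hexd0, hexd, hHom⟩ := hN
  obtain ⟨K, A, f, g, hKmem, hAmem, hsKA⟩ := hcom.2 (B 0)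
  -- A ∈ 𝒜 ∩ ℬ
  have hAB : A ∈ ℬ := memB_of_ses hcp f g hsKA hKmem (hBmem 0)
  have hAin : A ∈ 𝒜 ∩ ℬ := ⟨hAmem, hAB⟩
  -- the cover map
  set πA : (A : Type u) →ₗ[R] N := ε ∘ₗ g with hπA
  have hπAs : Function.Surjective πA := hεs.comp hsKA.2.1
  -- Hom-surjectivity of the cover
  have hcover : ∀ L ∈ 𝒜 ∩ ℬ, ∀ φ : (L : Type u) →ₗ[R] N,
      ∃ ψ : (L : Type u) →ₗ[R] A, πA ∘ₗ ψ = φ := by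
    intro L hL φ
    obtain ⟨ψ₀, hψ₀⟩ := (hHom L hL).1 φ
    have hLK : ExtVanishes R 1 L K := (hcp.mem_right K).1 hKmem L hL.1
    obtain ⟨ψ, hψ⟩ := lift_of_ext f g hsKA hLK ψ₀
    exact ⟨ψ, by rw [hπA, LinearMap.comp_assoc, hψ]; exact hψ₀⟩
  refine ⟨A, πA, hAin, hπAs, hcover, ?_, ?_⟩
  · -- Ext vanishing for the kernel
    intro i hi L hL
    have hses : IsShortExact (X := ModuleCat.of R (LinearMap.ker πA)) (Y := A) (Z := N)
        ((LinearMap.ker πA).subtype) πA := by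
      refine ⟨Submodule.injective_subtype _, hπAs, fun y => ?_⟩
      constructor
      · intro hy; exact ⟨⟨y, hy⟩, rfl⟩
      · rintro ⟨⟨z, hz⟩, rfl⟩; exact hz
    match i, hi with
    | 1, _ =>
      exact extVanishes_one_ker ((LinearMap.ker πA).subtype) πA hses
        (hcover L hL) ((hcp.mem_left L).1 hL.1 A hAB)
    | (j+2), _ =>
      exact extVanishes_succ_ker ((LinearMap.ker πA).subtype) πA hses j
        (hext (j+1) (by omega) L hL) (hher (j+2) (by omega) L hL.1 A hAB)
  · -- a Hom-exact ℬ-resolution of the kernel, via a pullback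
    set ρ : ((B 1 : Type u) × (A : Type u)) →ₗ[R] B 0 :=
      (d 0) ∘ₗ (LinearMap.fst R (B 1) A) - g ∘ₗ (LinearMap.snd R (B 1) A) with hρ
    have hρmem : ∀ x : (B 1 : Type u) × (A : Type u),
        x ∈ LinearMap.ker ρ ↔ d 0 x.1 = g x.2 := by
      intro x
      rw [LinearMap.mem_ker, hρ]
      simp [sub_eq_zero]
    -- the map P → ker πA
    have hq0 : ∀ x : LinearMap.ker ρ, πA ((x : (B 1 : Type u) × A).2) = 0 := by
      intro x
      have h1 : d 0 (x : (B 1 : Type u) × A).1 = g (x : (B 1 : Type u) × A).2 :=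
        (hρmem _).1 x.2
      rw [hπA]
      show ε (g (x : (B 1 : Type u) × A).2) = 0
      rw [← h1]
      exact hexd0.apply_apply_eq_zero _
    set q : (LinearMap.ker ρ : Type u) →ₗ[R] (LinearMap.ker πA : Type u) :=
      LinearMap.codRestrict (LinearMap.ker πA)
        ((LinearMap.snd R (B 1) A) ∘ₗ (LinearMap.ker ρ).subtype) (fun x => hq0 x) with hq
    -- the map B 2 → P
    have hj0 : ∀ x : (B 2 : Type u), ((LinearMap.prod (d 1) (0 : (B 2 : Type u) →ₗ[R] A)) x)
        ∈ LinearMap.ker ρ := by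
      intro x
      rw [hρmem]
      show d 0 (d 1 x) = g 0
      rw [(hexd 0).apply_apply_eq_zero x, map_zero]
    set j : (B 2 : Type u) →ₗ[R] (LinearMap.ker ρ : Type u) :=
      LinearMap.codRestrict (LinearMap.ker ρ)
        (LinearMap.prod (d 1) (0 : (B 2 : Type u) →ₗ[R] A)) hj0 with hj
    have hjval : ∀ x : (B 2 : Type u), ((j x : (B 1 : Type u) × A)) = (d 1 x, 0) := fun x => rfl
    -- P ∈ ℬ via the short exact sequence K → P → B 1
    have hfK0 : ∀ k : (K : Type u), ((LinearMap.prod (0 : (K : Type u) →ₗ[R] B 1) f) k)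
        ∈ LinearMap.ker ρ := by
      intro k
      rw [hρmem]
      show d 0 0 = g (f k)
      rw [map_zero, hsKA.2.2.apply_apply_eq_zero k]
    set fK : (K : Type u) →ₗ[R] (LinearMap.ker ρ : Type u) :=
      LinearMap.codRestrict (LinearMap.ker ρ)
        (LinearMap.prod (0 : (K : Type u) →ₗ[R] B 1) f) hfK0 with hfK
    set pr : (LinearMap.ker ρ : Type u) →ₗ[R] B 1 :=
      (LinearMap.fst R (B 1) A) ∘ₗ (LinearMap.ker ρ).subtype with hpr
    have hsP : IsShortExact (X := K) (Y := ModuleCat.of R (LinearMap.ker ρ)) (Z := B 1)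
        fK pr := by
      refine ⟨?_, ?_, ?_⟩
      · show Function.Injective (fK : (K : Type u) →ₗ[R] (LinearMap.ker ρ : Type u))
        intro a b hab
        apply hsKA.1
        exact congrArg (fun z : LinearMap.ker ρ => (z : (B 1 : Type u) × A).2) hab
      · show Function.Surjective (pr : (LinearMap.ker ρ : Type u) →ₗ[R] (B 1 : Type u))
        intro b
        obtain ⟨a, ha⟩ := hsKA.2.1 (d 0 b)
        exact ⟨⟨(b, a), (hρmem _).2 ha.symm⟩, rfl⟩
      · show Function.Exact (fK : (K : Type u) →ₗ[R] (LinearMap.ker ρ : Type u))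
          (pr : (LinearMap.ker ρ : Type u) →ₗ[R] (B 1 : Type u))
        rintro ⟨⟨x1, x2⟩, hxm⟩
        constructor
        · intro hx
          have hx1 : x1 = 0 := hx
          have hx2 : g x2 = 0 := by
            have hd := (hρmem (x1, x2)).1 hxm
            simp only at hd
            rw [← hd, hx1, map_zero]
          obtain ⟨k, hk⟩ := (hsKA.2.2 _).1 hx2
          refine ⟨k, Subtype.ext ?_⟩
          show ((0 : (B 1 : Type u)), f k) = (x1, x2)
          rw [hk, ← hx1]
        · rintro ⟨k, hk⟩
          show x1 = 0
          exact (congrArg (fun z : LinearMap.ker ρ => (z : (B 1 : Type u) × A).1) hk.symm :)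
    have hPmem : ModuleCat.of R (LinearMap.ker ρ) ∈ ℬ :=
      memB_of_ses hcp fK pr hsP hKmem (hBmem 1)
    -- assemble the resolution
    refine ⟨fun n => Nat.rec (ModuleCat.of R (LinearMap.ker ρ)) (fun k _ => B (k+2)) n,
      fun n => Nat.rec j (fun k _ => d (k+2)) n, q, ?_, ?_, ?_, ?_, ?_⟩
    · intro n
      cases n with
      | zero => exact hPmem
      | succ k => exact hBmem (k+2)
    · -- surjectivity of q
      show Function.Surjective
        (q : (LinearMap.ker ρ : Type u) →ₗ[R] (LinearMap.ker πA : Type u))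
      rintro ⟨a, ha⟩
      have hga : ε (g a) = 0 := ha
      obtain ⟨b, hb⟩ := (hexd0 (g a)).1 hga
      exact ⟨⟨(b, a), (hρmem _).2 hb⟩, rfl⟩
    · -- exactness of B 2 → P → ker πA
      show Function.Exact (j : (B 2 : Type u) →ₗ[R] (LinearMap.ker ρ : Type u))
        (q : (LinearMap.ker ρ : Type u) →ₗ[R] (LinearMap.ker πA : Type u))
      rintro ⟨⟨x1, x2⟩, hxm⟩
      constructor
      · intro hx
        have hx2 : x2 = 0 := congrArg Subtype.val hx
        have hx1 : d 0 x1 = 0 := by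
          have := (hρmem _).1 hxm
          simp only at this
          rw [this, hx2, map_zero]
        obtain ⟨y, hy⟩ := (hexd 0 _).1 hx1
        refine ⟨y, Subtype.ext ?_⟩
        show ((d 1 y : (B 1 : Type u)), (0 : (A : Type u))) = (x1, x2)
        rw [hy, ← hx2]
      · rintro ⟨y, hy⟩
        apply Subtype.ext
        show x2 = 0
        exact (congrArg (fun p : (B 1 : Type u) × (A : Type u) => p.2)
          (congrArg Subtype.val hy)).symm
    · -- exactness in the body of the resolution
      intro n
      cases n with
      | zero =>
        show Function.Exact (d 2 : (B 3 : Type u) →ₗ[R] B 2)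
          (j : (B 2 : Type u) →ₗ[R] (LinearMap.ker ρ : Type u))
        intro x
        constructor
        · intro hx
          have hx' : d 1 x = 0 := congrArg (fun z : LinearMap.ker ρ =>
            (z : (B 1 : Type u) × A).1) hx
          exact (hexd 1 x).1 hx'
        · rintro ⟨y, rfl⟩
          apply Subtype.ext
          show ((d 1 (d 2 y) : (B 1 : Type u)), (0 : (A : Type u))) = 0
          rw [(hexd 1).apply_apply_eq_zero y]
          rfl
      | succ k => exact hexd (k+2)
    · -- Hom-exactness
      intro L hL
      obtain ⟨hH1, hH2, hH3⟩ := hHom L hL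
      refine ⟨?_, ?_, ?_⟩
      · -- surjectivity onto Hom(L, ker πA)
        show Function.Surjective (fun h : (L : Type u) →ₗ[R] (LinearMap.ker ρ : Type u) =>
          ((q : (LinearMap.ker ρ : Type u) →ₗ[R] (LinearMap.ker πA : Type u)).comp h))
        intro φ
        set α : (L : Type u) →ₗ[R] A := (LinearMap.ker πA).subtype ∘ₗ φ with hα
        have hεgα : ε.comp (g ∘ₗ α) = 0 := by
          ext l
          exact (φ l).2
        obtain ⟨β, hβ⟩ := (hH2 (g ∘ₗ α)).1 hεgα
        have hmem : ∀ l : (L : Type u), (β l, α l) ∈ LinearMap.ker ρ := by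
          intro l
          rw [hρmem]
          exact LinearMap.congr_fun hβ l
        refine ⟨LinearMap.codRestrict (LinearMap.ker ρ) (LinearMap.prod β α) hmem, ?_⟩
        refine LinearMap.ext fun l => Subtype.ext ?_
        show α l = ((φ l : (LinearMap.ker πA : Type u)) : (A : Type u))
        rfl
      · -- exactness at Hom(L, P)
        show Function.Exact
          (fun h : (L : Type u) →ₗ[R] (B 2 : Type u) =>
            ((j : (B 2 : Type u) →ₗ[R] (LinearMap.ker ρ : Type u)).comp h))
          (fun h : (L : Type u) →ₗ[R] (LinearMap.ker ρ : Type u) =>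
            ((q : (LinearMap.ker ρ : Type u) →ₗ[R] (LinearMap.ker πA : Type u)).comp h))
        intro χ
        constructor
        · intro hχ
          set β : (L : Type u) →ₗ[R] B 1 := pr ∘ₗ χ with hβ
          have hχ2 : ∀ l : (L : Type u), ((χ l : (B 1 : Type u) × A)).2 = 0 := by
            intro l
            exact congrArg Subtype.val (LinearMap.congr_fun hχ l)
          have hd0β : (d 0).comp β = 0 := by
            ext l
            show d 0 ((χ l : (B 1 : Type u) × A)).1 = 0
            rw [(hρmem _).1 (χ l).2, hχ2 l, map_zero]
          obtain ⟨h, hh⟩ := (hH3 0 β).1 hd0β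
          refine ⟨h, ?_⟩
          refine LinearMap.ext fun l => Subtype.ext ?_
          show ((d 1 (h l) : (B 1 : Type u)), (0 : (A : Type u))) = (χ l : (B 1 : Type u) × A)
          have h1 : d 1 (h l) = β l := LinearMap.congr_fun hh l
          have h2 : β l = ((χ l : (B 1 : Type u) × A)).1 := rfl
          rw [h1, h2, ← hχ2 l]
        · rintro ⟨h, rfl⟩
          refine LinearMap.ext fun l => Subtype.ext ?_
          show (0 : (A : Type u)) = 0
          rfl
      · -- exactness at the rest
        intro n
        cases n with
        | zero =>
          show Function.Exact
            (fun h : (L : Type u) →ₗ[R] (B 3 : Type u) => ((d 2).comp h))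
            (fun h : (L : Type u) →ₗ[R] (B 2 : Type u) =>
              ((j : (B 2 : Type u) →ₗ[R] (LinearMap.ker ρ : Type u)).comp h))
          intro h
          constructor
          · intro hh
            have hd1h : (d 1).comp h = 0 := by
              ext l
              exact congrArg (fun z : LinearMap.ker ρ => (z : (B 1 : Type u) × A).1)
                (LinearMap.congr_fun hh l)
            exact (hH3 1 h).1 hd1h
          · rintro ⟨k, rfl⟩
            refine LinearMap.ext fun l => Subtype.ext ?_
            show ((d 1 (d 2 (k l)) : (B 1 : Type u)), (0 : (A : Type u))) = 0
            rw [(hexd 1).apply_apply_eq_zero (k l)]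
            rfl
        | succ m => exact hH3 (m+2)

end GorAux

namespace GorAux

variable {𝒜 ℬ : Set (ModuleCat.{u} R)} (hcp : IsCotorsionPair R 𝒜 ℬ)
  (hher : IsHereditary R 𝒜 ℬ) (hcom : IsCompletePair R 𝒜 ℬ)
  (M : ModuleCat.{u} R) (hM : Good 𝒜 ℬ M)

/-- The chain of syzygies. -/
noncomputable def chainN : ℕ → Σ' Nm : ModuleCat.{u} R, Good 𝒜 ℬ Nm
  | 0 => ⟨M, hM⟩
  | (n+1) =>
    let p := chainN n
    ⟨ModuleCat.of R (LinearMap.ker (step hcp hher hcom p.1 p.2).choose_spec.choose),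
     (step hcp hher hcom p.1 p.2).choose_spec.choose_spec.2.2.2⟩

/-- The `𝒜 ∩ ℬ` cover at stage `n`. -/
noncomputable def covA (n : ℕ) : ModuleCat.{u} R :=
  (step hcp hher hcom (chainN hcp hher hcom M hM n).1 (chainN hcp hher hcom M hM n).2).choose

/-- The cover map at stage `n`. -/
noncomputable def covπ (n : ℕ) :
    (covA hcp hher hcom M hM n : Type u) →ₗ[R] (chainN hcp hher hcom M hM n).1 :=
  (step hcp hher hcom (chainN hcp hher hcom M hM n).1
    (chainN hcp hher hcom M hM n).2).choose_spec.choose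

lemma covspec (n : ℕ) :
    covA hcp hher hcom M hM n ∈ 𝒜 ∩ ℬ ∧
    Function.Surjective (covπ hcp hher hcom M hM n) ∧
    (∀ L ∈ 𝒜 ∩ ℬ, ∀ φ : (L : Type u) →ₗ[R] (chainN hcp hher hcom M hM n).1,
      ∃ ψ : (L : Type u) →ₗ[R] covA hcp hher hcom M hM n,
        (covπ hcp hher hcom M hM n) ∘ₗ ψ = φ) ∧
    Good 𝒜 ℬ (ModuleCat.of R (LinearMap.ker (covπ hcp hher hcom M hM n))) :=
  (step hcp hher hcom (chainN hcp hher hcom M hM n).1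
    (chainN hcp hher hcom M hM n).2).choose_spec.choose_spec

/-- The cover map at stage `n+1`, seen as landing in the kernel of the previous one. -/
noncomputable def covπ' (n : ℕ) :
    (covA hcp hher hcom M hM (n+1) : Type u) →ₗ[R]
      (LinearMap.ker (covπ hcp hher hcom M hM n) : Type u) :=
  covπ hcp hher hcom M hM (n+1)

end GorAux

namespace GorAux

lemma good_resolution {𝒜 ℬ : Set (ModuleCat.{u} R)} (hcp : IsCotorsionPair R 𝒜 ℬ)
    (hher : IsHereditary R 𝒜 ℬ) (hcom : IsCompletePair R 𝒜 ℬ)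
    (M : ModuleCat.{u} R) (hM : Good 𝒜 ℬ M) :
    ∃ (X : ℕ → ModuleCat.{u} R) (d : ∀ n, (X (n + 1) : Type u) →ₗ[R] X n)
      (ε : (X 0 : Type u) →ₗ[R] M),
      (∀ n, X n ∈ 𝒜 ∩ ℬ) ∧ Function.Surjective ε ∧
      Function.Exact (d 0) ε ∧ (∀ n, Function.Exact (d (n + 1)) (d n)) ∧
      ∀ L ∈ 𝒜 ∩ ℬ,
        Function.Surjective (fun h : (L : Type u) →ₗ[R] X 0 => ε.comp h) ∧
        Function.Exact (fun h : (L : Type u) →ₗ[R] X 1 => (d 0).comp h)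
          (fun h : (L : Type u) →ₗ[R] X 0 => ε.comp h) ∧
        ∀ n, Function.Exact (fun h : (L : Type u) →ₗ[R] X (n + 2) => (d (n + 1)).comp h)
          (fun h : (L : Type u) →ₗ[R] X (n + 1) => (d n).comp h) := by
  classical
  set A : ℕ → ModuleCat.{u} R := covA hcp hher hcom M hM with hA
  set π' : ∀ n, (A (n+1) : Type u) →ₗ[R] (LinearMap.ker (covπ hcp hher hcom M hM n) : Type u) :=
    covπ' hcp hher hcom M hM with hπ'
  set d : ∀ n, (A (n+1) : Type u) →ₗ[R] A n :=
    fun n => (LinearMap.ker (covπ hcp hher hcom M hM n)).subtype ∘ₗ π' n with hd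
  set ε : (A 0 : Type u) →ₗ[R] M := covπ hcp hher hcom M hM 0 with hε
  have hπ'surj : ∀ n, Function.Surjective (π' n) := fun n =>
    (covspec hcp hher hcom M hM (n+1)).2.1
  have hπ'hom : ∀ n, ∀ L ∈ 𝒜 ∩ ℬ,
      ∀ φ : (L : Type u) →ₗ[R] (LinearMap.ker (covπ hcp hher hcom M hM n) : Type u),
      ∃ ψ : (L : Type u) →ₗ[R] A (n+1), (π' n) ∘ₗ ψ = φ := fun n L hL φ =>
    (covspec hcp hher hcom M hM (n+1)).2.2.1 L hL φ
  refine ⟨A, d, ε, fun n => (covspec hcp hher hcom M hM n).1,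
    (covspec hcp hher hcom M hM 0).2.1, ?_, ?_, ?_⟩
  · -- Exact (d 0) ε
    intro y
    constructor
    · intro hy
      obtain ⟨x, hx⟩ := hπ'surj 0 ⟨y, hy⟩
      exact ⟨x, congrArg Subtype.val hx⟩
    · rintro ⟨x, rfl⟩
      exact (π' 0 x).2
  · -- Exact (d (n+1)) (d n)
    intro n y
    constructor
    · intro hy
      have h0 : π' n y = 0 := Subtype.ext hy
      have h1 : covπ hcp hher hcom M hM (n+1) y = 0 := h0
      obtain ⟨x, hx⟩ := hπ'surj (n+1) ⟨y, h1⟩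
      exact ⟨x, congrArg Subtype.val hx⟩
    · rintro ⟨x, rfl⟩
      show (LinearMap.ker (covπ hcp hher hcom M hM n)).subtype (π' n ((d (n+1)) x)) = 0
      have h2 : π' n ((d (n+1)) x) = 0 := by
        show covπ hcp hher hcom M hM (n+1) ((d (n+1)) x) = 0
        exact (π' (n+1) x).2
      rw [h2, map_zero]
  · -- Hom-exactness
    intro L hL
    refine ⟨?_, ?_, ?_⟩
    · intro φ
      obtain ⟨ψ, hψ⟩ := (covspec hcp hher hcom M hM 0).2.2.1 L hL φ
      exact ⟨ψ, hψ⟩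
    · intro h
      constructor
      · intro hh
        have hmem : ∀ l : (L : Type u), h l ∈ LinearMap.ker (covπ hcp hher hcom M hM 0) :=
          fun l => LinearMap.congr_fun hh l
        obtain ⟨ψ, hψ⟩ := hπ'hom 0 L hL
          (LinearMap.codRestrict (LinearMap.ker (covπ hcp hher hcom M hM 0)) h hmem)
        refine ⟨ψ, LinearMap.ext fun l => ?_⟩
        show (LinearMap.ker (covπ hcp hher hcom M hM 0)).subtype (π' 0 (ψ l)) = h l
        have e := LinearMap.congr_fun hψ l
        simp only [LinearMap.comp_apply] at e
        rw [e]
        rfl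
      · rintro ⟨ψ, rfl⟩
        refine LinearMap.ext fun l => ?_
        show ε ((LinearMap.ker (covπ hcp hher hcom M hM 0)).subtype (π' 0 (ψ l))) = 0
        exact (π' 0 (ψ l)).2
    · intro n h
      constructor
      · intro hh
        have hmem : ∀ l : (L : Type u), h l ∈ LinearMap.ker (covπ hcp hher hcom M hM (n+1)) := by
          intro l
          have h0 : (d n) (h l) = 0 := LinearMap.congr_fun hh l
          have h1 : π' n (h l) = 0 := Subtype.ext h0
          exact h1
        obtain ⟨ψ, hψ⟩ := hπ'hom (n+1) L hL
          (LinearMap.codRestrict (LinearMap.ker (covπ hcp hher hcom M hM (n+1))) h hmem)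
        refine ⟨ψ, LinearMap.ext fun l => ?_⟩
        show (LinearMap.ker (covπ hcp hher hcom M hM (n+1))).subtype (π' (n+1) (ψ l)) = h l
        have e := LinearMap.congr_fun hψ l
        simp only [LinearMap.comp_apply] at e
        rw [e]
        rfl
      · rintro ⟨ψ, rfl⟩
        refine LinearMap.ext fun l => ?_
        show (d n) ((d (n+1)) (ψ l)) = 0
        show (LinearMap.ker (covπ hcp hher hcom M hM n)).subtype (π' n ((d (n+1)) (ψ l))) = 0
        have h2 : π' n ((d (n+1)) (ψ l)) = 0 := by
          show covπ hcp hher hcom M hM (n+1) ((d (n+1)) (ψ l)) = 0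
          exact (π' (n+1) (ψ l)).2
        rw [h2, map_zero]

end GorAux

end

/-- `M` is a Gorenstein `ℬ`-module iff `Ext^i(X, M) = 0` for all `i ≥ 1` and
`X ∈ 𝒜 ∩ ℬ` and there is a `Hom(𝒜 ∩ ℬ, -)` exact exact sequence `⋯ → B₁ → B₀ → M → 0`
with each `Bᵢ ∈ ℬ`. -/
theorem gorenstein_iff_resolution_in_B
    (𝒜 ℬ : Set (ModuleCat.{u} R)) (hcp : IsCotorsionPair R 𝒜 ℬ)
    (hher : IsHereditary R 𝒜 ℬ) (hcom : IsCompletePair R 𝒜 ℬ) (M : ModuleCat.{u} R) :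
    IsGorenstein 𝒜 ℬ M ↔
      ((∀ i, 1 ≤ i → ∀ L ∈ 𝒜 ∩ ℬ, ExtVanishes R i L M) ∧
        ∃ (X : ℕ → ModuleCat.{u} R) (d : ∀ n, X (n + 1) →ₗ[R] X n) (ε : X 0 →ₗ[R] M),
          (∀ n, X n ∈ ℬ) ∧ Function.Surjective ε ∧
          Function.Exact (d 0) ε ∧ (∀ n, Function.Exact (d (n + 1)) (d n)) ∧
          ∀ L ∈ 𝒜 ∩ ℬ,
            Function.Surjective (fun h : L →ₗ[R] X 0 => ε.comp h) ∧
            Function.Exact (fun h : L →ₗ[R] X 1 => (d 0).comp h)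
              (fun h : L →ₗ[R] X 0 => ε.comp h) ∧
            ∀ n, Function.Exact (fun h : L →ₗ[R] X (n + 2) => (d (n + 1)).comp h)
              (fun h : L →ₗ[R] X (n + 1) => (d n).comp h)) := by
  constructor
  · rintro ⟨hext, X, d, ε, hX, hs, he0, hen, hhom⟩
    exact ⟨hext, X, d, ε, fun n => (hX n).2, hs, he0, hen, hhom⟩
  · rintro ⟨hext, hres⟩
    have hM : GorAux.Good 𝒜 ℬ M := ⟨hext, hres⟩
    obtain ⟨X, d, ε, h1, h2, h3, h4, h5⟩ := GorAux.good_resolution hcp hher hcom M hM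
    exact ⟨hext, X, d, ε, h1, h2, h3, h4, h5⟩
end
end

section
/- Let (A, B) be a complete hereditary cotorsion pair in Mod R and let 0 → X → Y → Z → 0 be a short exact sequence of R-modules. If X and Z are Gorenstein B-modules, then Y is a Gorenstein B-module. -/
open CategoryTheory

universe u

variable {R : Type u} [Ring R]

/-! ### Auxiliary lemmas -/

section Helpers

variable {M' N' W' Y' : Type u} [AddCommGroup M'] [AddCommGroup N'] [AddCommGroup W']
  [AddCommGroup Y'] [Module R M'] [Module R N'] [Module R W'] [Module R Y']

/-- Descend a linear map along a surjection whose kernel it kills. -/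
lemma exists_comp_eq_of_ker_le (e : M' →ₗ[R] N') (he : Function.Surjective e)
    (u : M' →ₗ[R] Y') (h : ∀ x, e x = 0 → u x = 0) :
    ∃ v : N' →ₗ[R] Y', v ∘ₗ e = u := by
  have key : ∀ a b : M', e a = e b → u a = u b := by
    intro a b hab
    have : u (a - b) = 0 := h _ (by rw [map_sub, hab, sub_self])
    rw [map_sub, sub_eq_zero] at this; exact this
  refine ⟨{ toFun := fun n => u (Classical.choose (he n)),
            map_add' := ?_, map_smul' := ?_ }, ?_⟩
  · intro a b
    rw [← map_add]
    refine key _ _ ?_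
    rw [map_add, Classical.choose_spec (he a), Classical.choose_spec (he b),
      Classical.choose_spec (he (a + b))]
  · intro r a
    rw [RingHom.id_apply, ← map_smul]
    refine key _ _ ?_
    rw [map_smul, Classical.choose_spec (he a), Classical.choose_spec (he (r • a))]
  · ext x
    exact key _ _ (Classical.choose_spec (he (e x)))

/-- Factor a linear map through an injection containing its range. -/
lemma exists_factor_of_range (f : M' →ₗ[R] N') (hf : Function.Injective f)
    (u : W' →ₗ[R] N') (h : ∀ w, ∃ x, f x = u w) :
    ∃ θ : W' →ₗ[R] M', f ∘ₗ θ = u := by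
  refine ⟨{ toFun := fun w => Classical.choose (h w),
            map_add' := ?_, map_smul' := ?_ }, ?_⟩
  · intro a b
    apply hf
    rw [map_add f, Classical.choose_spec (h a), Classical.choose_spec (h b),
      Classical.choose_spec (h (a + b)), map_add]
  · intro r a
    apply hf
    rw [RingHom.id_apply, map_smul f, Classical.choose_spec (h a),
      Classical.choose_spec (h (r • a)), map_smul]
  · ext w
    exact Classical.choose_spec (h w)

end Helpers

section ResFacts

variable {L : ModuleCat.{u} R} (P : ProjectiveResolution L)

lemma res_surj : Function.Surjective (P.π.f 0) :=
  (ModuleCat.epi_iff_surjective _).1 inferInstance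

lemma res_exact₀ : ∀ u : P.complex.X 0, P.π.f 0 u = 0 → ∃ v, P.complex.d 1 0 v = u := by
  have := P.exact₀
  rw [ShortComplex.moduleCat_exact_iff] at this
  exact this

lemma res_exact_succ (n : ℕ) :
    ∀ u : P.complex.X (n+1), P.complex.d (n+1) n u = 0 →
      ∃ v, P.complex.d (n+2) (n+1) v = u := by
  have := P.exact_succ n
  rw [ShortComplex.moduleCat_exact_iff] at this
  exact this

lemma res_d_π (x : P.complex.X 1) : P.π.f 0 (P.complex.d 1 0 x) = 0 :=
  ConcreteCategory.congr_hom (P.complex_d_comp_π_f_zero :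
    (_ : P.complex.X 1 ⟶ L) = 0) x

lemma res_dd (i : ℕ) (x : P.complex.X (i+2)) :
    P.complex.d (i+1) i (P.complex.d (i+2) (i+1) x) = 0 :=
  ConcreteCategory.congr_hom (P.complex.d_comp_d (i+2) (i+1) i :
    (_ : P.complex.X (i+2) ⟶ P.complex.X i) = 0) x

end ResFacts

section ExtChar

lemma subsingleton_of_isZero {S : Type*} [Ring S] {N : ModuleCat.{u} S}
    (h : Limits.IsZero N) : Subsingleton N := by
  constructor
  intro a b
  have h1 : (𝟙 N : N ⟶ N) = 0 := h.eq_of_src _ _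
  have h2 := DFunLike.congr_fun (congrArg ModuleCat.Hom.hom h1)
  simpa using (h2 a).trans (h2 b).symm

lemma isZero_iff_subsingleton {S : Type*} [Ring S] (N : ModuleCat.{u} S) :
    Limits.IsZero N ↔ Subsingleton N :=
  ⟨subsingleton_of_isZero, fun h => @ModuleCat.isZero_of_subsingleton _ _ N h⟩

/-- Characterization of Ext vanishing via any projective resolution. -/
lemma extVanishes_succ_iff (L M : ModuleCat.{u} R) (P : ProjectiveResolution L) (i : ℕ) :
    ExtVanishes R (i+1) L M ↔ ∀ φ : P.complex.X (i+1) ⟶ M,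
      P.complex.d (i+2) (i+1) ≫ φ = 0 →
      ∃ ψ : P.complex.X i ⟶ M, P.complex.d (i+1) i ≫ ψ = φ := by
  have h1 : ExtVanishes R (i+1) L M ↔
      Limits.IsZero ((P.complex.linearYonedaObj ℤ M).homology (i+1)) := by
    unfold ExtVanishes
    rw [← isZero_iff_subsingleton]
    exact ⟨fun h => Limits.IsZero.of_iso h (P.isoExt (i+1) M).symm,
      fun h => Limits.IsZero.of_iso h (P.isoExt (i+1) M)⟩
  rw [h1, ← HomologicalComplex.exactAt_iff_isZero_homology,
    HomologicalComplex.exactAt_iff' _ i (i+1) (i+2) (by simp) (by simp),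
    ShortComplex.moduleCat_exact_iff]
  simp only [HomologicalComplex.sc', HomologicalComplex.shortComplexFunctor',
    ChainComplex.linearYonedaObj_X, ChainComplex.linearYonedaObj_d]
  exact Iff.rfl

end ExtChar

section SES

variable {X Y Z : ModuleCat.{u} R} {f : X →ₗ[R] Y} {g : Y →ₗ[R] Z}

/-- Lifting along the surjection of a SES when `Ext¹(L, X) = 0`. -/
lemma lift_of_ext1 (hse : IsShortExact f g) {L : ModuleCat.{u} R}
    (h1 : ExtVanishes R 1 L X) (φ : L →ₗ[R] Z) : ∃ ψ : L →ₗ[R] Y, g ∘ₗ ψ = φ := by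
  obtain ⟨hf, hg, hex⟩ := hse
  set P := ProjectiveResolution.of L with hP
  haveI : Epi (ModuleCat.ofHom g) := (ModuleCat.epi_iff_surjective _).2 hg
  set u₀ : P.complex.X 0 ⟶ Y :=
    Projective.factorThru (P.π.f 0 ≫ ModuleCat.ofHom φ) (ModuleCat.ofHom g) with hu₀def
  have hu₀ : ∀ x, g (u₀ x) = φ (P.π.f 0 x) := by
    intro x
    exact ConcreteCategory.congr_hom
      ((Projective.factorThru_comp _ _ : u₀ ≫ ModuleCat.ofHom g = _) :
        u₀ ≫ ModuleCat.ofHom g = P.π.f 0 ≫ ModuleCat.ofHom φ) x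
  obtain ⟨v, hv⟩ := exists_factor_of_range (R := R) f hf
      (u₀.hom ∘ₗ (P.complex.d 1 0).hom) (by
    intro w
    have : g (u₀ (P.complex.d 1 0 w)) = 0 := by
      rw [hu₀, res_d_π]; exact map_zero φ
    exact (hex _).1 this)
  have hv' : ∀ x, f (v x) = u₀ (P.complex.d 1 0 x) := fun x => DFunLike.congr_fun hv x
  obtain ⟨w, hw⟩ := (extVanishes_succ_iff L X P 0).1 h1 (ModuleCat.ofHom v) (by
    apply ModuleCat.hom_ext; apply LinearMap.ext
    intro x
    apply hf
    show f (v (P.complex.d 2 1 x)) = f 0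
    rw [map_zero, hv']
    show u₀ (P.complex.d 1 0 (P.complex.d 2 1 x)) = 0
    rw [res_dd P 0, map_zero])
  have hw' : ∀ x, w (P.complex.d 1 0 x) = v x := fun x => ConcreteCategory.congr_hom hw x
  obtain ⟨ψ, hψ⟩ := exists_comp_eq_of_ker_le (R := R) (P.π.f 0).hom (res_surj P)
      (u₀.hom - f ∘ₗ w.hom) (by
    intro x hx
    obtain ⟨y, hy⟩ := res_exact₀ P x hx
    subst hy
    show u₀ (P.complex.d 1 0 y) - f (w (P.complex.d 1 0 y)) = 0
    rw [hw', hv', sub_self])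
  have hψ' : ∀ x, ψ (P.π.f 0 x) = u₀ x - f (w x) := fun x => DFunLike.congr_fun hψ x
  refine ⟨ψ, ?_⟩
  apply LinearMap.ext
  intro l
  obtain ⟨x, rfl⟩ := res_surj P l
  show g (ψ (P.π.f 0 x)) = φ (P.π.f 0 x)
  rw [hψ', map_sub, hu₀, hex.apply_apply_eq_zero, sub_zero]

/-- Two-out-of-three for Ext vanishing in a SES (middle term). -/
lemma extVanishes_mid (hse : IsShortExact f g) {L : ModuleCat.{u} R} (i : ℕ)
    (hXv : ExtVanishes R (i+1) L X) (hZv : ExtVanishes R (i+1) L Z) :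
    ExtVanishes R (i+1) L Y := by
  obtain ⟨hf, hg, hex⟩ := hse
  set P := ProjectiveResolution.of L with hP
  haveI : Epi (ModuleCat.ofHom g) := (ModuleCat.epi_iff_surjective _).2 hg
  rw [extVanishes_succ_iff L Y P i]
  intro φ hφ
  have hφ' : ∀ x, φ (P.complex.d (i+2) (i+1) x) = 0 := fun x => ConcreteCategory.congr_hom hφ x
  obtain ⟨ψ, hψ⟩ := (extVanishes_succ_iff L Z P i).1 hZv
      (ModuleCat.ofHom (g ∘ₗ φ.hom)) (by
    apply ModuleCat.hom_ext; apply LinearMap.ext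
    intro x
    show g (φ (P.complex.d (i+2) (i+1) x)) = 0
    rw [hφ', map_zero])
  have hψ' : ∀ x, ψ (P.complex.d (i+1) i x) = g (φ x) := fun x => ConcreteCategory.congr_hom hψ x
  set ψ' : P.complex.X i ⟶ Y := Projective.factorThru ψ (ModuleCat.ofHom g) with hψ'def
  have hgψ' : ∀ x, g (ψ' x) = ψ x := fun x => ConcreteCategory.congr_hom
    ((Projective.factorThru_comp _ _ : ψ' ≫ ModuleCat.ofHom g = ψ) :
      ψ' ≫ ModuleCat.ofHom g = ψ) x
  obtain ⟨θ, hθ⟩ := exists_factor_of_range (R := R) f hf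
      (φ.hom - ψ'.hom ∘ₗ (P.complex.d (i+1) i).hom) (by
    intro x
    refine (hex _).1 ?_
    show g (φ x - ψ' (P.complex.d (i+1) i x)) = 0
    rw [map_sub, hgψ', hψ', sub_self])
  have hθ' : ∀ x, f (θ x) = φ x - ψ' (P.complex.d (i+1) i x) :=
    fun x => DFunLike.congr_fun hθ x
  obtain ⟨η, hη⟩ := (extVanishes_succ_iff L X P i).1 hXv (ModuleCat.ofHom θ) (by
    apply ModuleCat.hom_ext; apply LinearMap.ext
    intro x
    apply hf
    show f (θ (P.complex.d (i+2) (i+1) x)) = f 0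
    rw [map_zero, hθ']
    show φ (P.complex.d (i+2) (i+1) x)
      - ψ' (P.complex.d (i+1) i (P.complex.d (i+2) (i+1) x)) = 0
    rw [hφ', res_dd, map_zero, sub_zero])
  have hη' : ∀ x, η (P.complex.d (i+1) i x) = θ x := fun x => ConcreteCategory.congr_hom hη x
  refine ⟨(ModuleCat.ofHom (ψ'.hom + f ∘ₗ η.hom)), ?_⟩
  apply ModuleCat.hom_ext; apply LinearMap.ext
  intro x
  show ψ' (P.complex.d (i+1) i x) + f (η (P.complex.d (i+1) i x)) = φ x
  rw [hη', hθ']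
  show ψ' (P.complex.d (i+1) i x) + (φ x - ψ' (P.complex.d (i+1) i x)) = φ x
  abel

end SES

/-- Ext into a product vanishes componentwise. -/
lemma extVanishes_prod_right (M N₁ N₂ : ModuleCat.{u} R) (i : ℕ)
    (h₁ : ExtVanishes R (i+1) M N₁) (h₂ : ExtVanishes R (i+1) M N₂) :
    ExtVanishes R (i+1) M (ModuleCat.of R (N₁ × N₂)) := by
  set P := ProjectiveResolution.of M with hP
  rw [extVanishes_succ_iff M (ModuleCat.of R (N₁ × N₂)) P i]
  intro φ hφ
  have hφ' : ∀ x, φ (P.complex.d (i+2) (i+1) x) = 0 := fun x => ConcreteCategory.congr_hom hφ x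
  obtain ⟨ψ₁, hψ₁⟩ := (extVanishes_succ_iff M N₁ P i).1 h₁
      (ModuleCat.ofHom (LinearMap.fst R N₁ N₂ ∘ₗ φ.hom)) (by
    apply ModuleCat.hom_ext; apply LinearMap.ext
    intro x
    show (φ (P.complex.d (i+2) (i+1) x)).1 = 0
    rw [hφ']
    rfl)
  obtain ⟨ψ₂, hψ₂⟩ := (extVanishes_succ_iff M N₂ P i).1 h₂
      (ModuleCat.ofHom (LinearMap.snd R N₁ N₂ ∘ₗ φ.hom)) (by
    apply ModuleCat.hom_ext; apply LinearMap.ext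
    intro x
    show (φ (P.complex.d (i+2) (i+1) x)).2 = 0
    rw [hφ']
    rfl)
  have hψ₁' : ∀ x, ψ₁ (P.complex.d (i+1) i x) = (φ x).1 := fun x => ConcreteCategory.congr_hom hψ₁ x
  have hψ₂' : ∀ x, ψ₂ (P.complex.d (i+1) i x) = (φ x).2 := fun x => ConcreteCategory.congr_hom hψ₂ x
  refine ⟨(ModuleCat.ofHom (LinearMap.prod ψ₁.hom ψ₂.hom) :
    P.complex.X i ⟶ ModuleCat.of R (N₁ × N₂)), ?_⟩
  apply ModuleCat.hom_ext; apply LinearMap.ext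
  intro x
  show (ψ₁ (P.complex.d (i+1) i x), ψ₂ (P.complex.d (i+1) i x)) = φ x
  rw [hψ₁', hψ₂']

section ProdRes

variable (M₁ M₂ : ModuleCat.{u} R) (P : ProjectiveResolution M₁) (Q : ProjectiveResolution M₂)

/-- The product of the complexes of two projective resolutions. -/
noncomputable def prodCx : ChainComplex (ModuleCat.{u} R) ℕ :=
  ChainComplex.of (fun n => ModuleCat.of R (P.complex.X n × Q.complex.X n))
    (fun n => (ModuleCat.ofHom (LinearMap.prodMap (P.complex.d (n+1) n).hom
      (Q.complex.d (n+1) n).hom) :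
        ModuleCat.of R (P.complex.X (n+1) × Q.complex.X (n+1)) ⟶
          ModuleCat.of R (P.complex.X n × Q.complex.X n)))
    (fun n => by
      apply ModuleCat.hom_ext; apply LinearMap.ext
      intro x
      show (P.complex.d (n+1) n (P.complex.d (n+2) (n+1) x.1),
        Q.complex.d (n+1) n (Q.complex.d (n+2) (n+1) x.2)) = 0
      rw [res_dd P n, res_dd Q n]
      rfl)

instance prodCx_projective (n : ℕ) : Projective ((prodCx M₁ M₂ P Q).X n) :=
  Projective.of_iso (ModuleCat.biprodIsoProd (P.complex.X n) (Q.complex.X n)) inferInstance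

lemma prodCx_d (n : ℕ) : (prodCx M₁ M₂ P Q).d (n+1) n =
    (ModuleCat.ofHom (LinearMap.prodMap (P.complex.d (n+1) n).hom
      (Q.complex.d (n+1) n).hom) :
        ModuleCat.of R (P.complex.X (n+1) × Q.complex.X (n+1)) ⟶
          ModuleCat.of R (P.complex.X n × Q.complex.X n)) := by
  exact ChainComplex.of_d (fun n => ModuleCat.of R (P.complex.X n × Q.complex.X n)) (fun n => (ModuleCat.ofHom (LinearMap.prodMap (P.complex.d (n+1) n).hom (Q.complex.d (n+1) n).hom) : ModuleCat.of R (P.complex.X (n+1) × Q.complex.X (n+1)) ⟶ ModuleCat.of R (P.complex.X n × Q.complex.X n))) n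

/-- The product of two projective resolutions is a projective resolution of the product. -/
noncomputable def prodRes : ProjectiveResolution (ModuleCat.of R (M₁ × M₂)) where
  complex := prodCx M₁ M₂ P Q
  π := (ChainComplex.toSingle₀Equiv _ _).symm
    ⟨(ModuleCat.ofHom (LinearMap.prodMap (P.π.f 0).hom (Q.π.f 0).hom) :
        ModuleCat.of R (P.complex.X 0 × Q.complex.X 0) ⟶ ModuleCat.of R (M₁ × M₂)), by
      rw [prodCx_d]
      apply ModuleCat.hom_ext; apply LinearMap.ext
      intro x
      show (P.π.f 0 (P.complex.d 1 0 x.1), Q.π.f 0 (Q.complex.d 1 0 x.2)) = 0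
      rw [res_d_π P, res_d_π Q]
      rfl⟩
  quasiIso := ⟨fun n => by
    cases n with
    | zero =>
      rw [ChainComplex.quasiIsoAt₀_iff, ShortComplex.quasiIso_iff_of_zeros']
      · have hcomp : (LinearMap.prodMap (P.π.f 0).hom (Q.π.f 0).hom) ∘ₗ
            (LinearMap.prodMap (P.complex.d 1 0).hom (Q.complex.d 1 0).hom) = 0 := by
          apply LinearMap.ext
          intro x
          show (P.π.f 0 (P.complex.d 1 0 x.1), Q.π.f 0 (Q.complex.d 1 0 x.2)) = 0
          rw [res_d_π P, res_d_π Q]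
          rfl
        have hexact : (ShortComplex.moduleCatMk _ _ hcomp).Exact := by
          rw [ShortComplex.moduleCat_exact_iff]
          rintro ⟨a, b⟩ hab
          have ha : P.π.f 0 a = 0 := congrArg Prod.fst hab
          have hb : Q.π.f 0 b = 0 := congrArg Prod.snd hab
          obtain ⟨a', ha'⟩ := res_exact₀ P a ha
          obtain ⟨b', hb'⟩ := res_exact₀ Q b hb
          exact ⟨(a', b'), by
            show (P.complex.d 1 0 a', Q.complex.d 1 0 b') = (a, b)
            rw [ha', hb']⟩
        have hepi : Epi (ShortComplex.moduleCatMk _ _ hcomp).g := by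
          refine (ModuleCat.epi_iff_surjective _).2 ?_
          rintro ⟨m₁, m₂⟩
          obtain ⟨a, ha⟩ := res_surj P m₁
          obtain ⟨b, hb⟩ := res_surj Q m₂
          exact ⟨(a, b), by
            show (P.π.f 0 a, Q.π.f 0 b) = (m₁, m₂)
            rw [ha, hb]⟩
        refine (ShortComplex.exact_and_epi_g_iff_of_iso ?_).2 ⟨hexact, hepi⟩
        refine ShortComplex.isoMk (Iso.refl _) (Iso.refl _) (Iso.refl _) ?_ ?_
        · dsimp
          apply ModuleCat.hom_ext; apply LinearMap.ext; intro x
          rfl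
        · dsimp
          apply ModuleCat.hom_ext; apply LinearMap.ext; intro x
          rfl
      all_goals rfl
    | succ n =>
      rw [quasiIsoAt_iff_exactAt']
      · rw [HomologicalComplex.exactAt_iff' _ (n+2) (n+1) n (by simp) (by simp),
          ShortComplex.moduleCat_exact_iff]
        intro x hx
        have hx2 : (prodCx M₁ M₂ P Q).d (n+1) n x = 0 := hx
        rw [prodCx_d] at hx2
        have ha : P.complex.d (n+1) n x.1 = 0 := congrArg Prod.fst hx2
        have hb : Q.complex.d (n+1) n x.2 = 0 := congrArg Prod.snd hx2
        obtain ⟨a', ha'⟩ := res_exact_succ P n x.1 ha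
        obtain ⟨b', hb'⟩ := res_exact_succ Q n x.2 hb
        refine ⟨(a', b'), ?_⟩
        show (prodCx M₁ M₂ P Q).d (n+2) (n+1) (a', b') = x
        rw [prodCx_d]
        show (P.complex.d (n+2) (n+1) a', Q.complex.d (n+2) (n+1) b') = x
        rw [ha', hb']
        exact Prod.mk.eta
      · apply ChainComplex.exactAt_succ_single_obj⟩

end ProdRes

/-- Ext out of a product vanishes componentwise. -/
lemma extVanishes_prod_left (M₁ M₂ N : ModuleCat.{u} R) (i : ℕ)
    (h₁ : ExtVanishes R (i+1) M₁ N) (h₂ : ExtVanishes R (i+1) M₂ N) :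
    ExtVanishes R (i+1) (ModuleCat.of R (M₁ × M₂)) N := by
  set P := ProjectiveResolution.of M₁ with hPdef
  set Q := ProjectiveResolution.of M₂ with hQdef
  rw [extVanishes_succ_iff _ N (prodRes M₁ M₂ P Q) i]
  intro φ hφ
  have hφ' : ∀ x, φ ((prodCx M₁ M₂ P Q).d (i+2) (i+1) x) = 0 :=
    fun x => ConcreteCategory.congr_hom hφ x
  have hd : ∀ x, (prodCx M₁ M₂ P Q).d (i+2) (i+1) x
      = (P.complex.d (i+2) (i+1) x.1, Q.complex.d (i+2) (i+1) x.2) :=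
    fun x => ConcreteCategory.congr_hom (prodCx_d M₁ M₂ P Q (i+1)) x
  have hd' : ∀ x, (prodCx M₁ M₂ P Q).d (i+1) i x
      = (P.complex.d (i+1) i x.1, Q.complex.d (i+1) i x.2) :=
    fun x => ConcreteCategory.congr_hom (prodCx_d M₁ M₂ P Q i) x
  obtain ⟨ψ₁, hψ₁⟩ := (extVanishes_succ_iff M₁ N P i).1 h₁
      ((ModuleCat.ofHom (φ.hom ∘ₗ LinearMap.inl R (P.complex.X (i+1)) (Q.complex.X (i+1)) :
        _ →ₗ[R] N)) : P.complex.X (i+1) ⟶ N) (by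
    apply ModuleCat.hom_ext; apply LinearMap.ext
    intro a
    show φ (P.complex.d (i+2) (i+1) a, 0) = 0
    have : ((P.complex.d (i+2) (i+1) a, 0) : ↑(P.complex.X (i+1)) × ↑(Q.complex.X (i+1)))
        = (prodCx M₁ M₂ P Q).d (i+2) (i+1) (a, 0) := by
      refine Eq.trans ?_ (hd (a, 0)).symm
      show _ = (P.complex.d (i+2) (i+1) a, Q.complex.d (i+2) (i+1) 0)
      rw [map_zero]
    rw [this]; exact hφ' _)
  obtain ⟨ψ₂, hψ₂⟩ := (extVanishes_succ_iff M₂ N Q i).1 h₂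
      ((ModuleCat.ofHom (φ.hom ∘ₗ LinearMap.inr R (P.complex.X (i+1)) (Q.complex.X (i+1)) :
        _ →ₗ[R] N)) : Q.complex.X (i+1) ⟶ N) (by
    apply ModuleCat.hom_ext; apply LinearMap.ext
    intro b
    show φ (0, Q.complex.d (i+2) (i+1) b) = 0
    have : (((0 : ↑(P.complex.X (i+1))), Q.complex.d (i+2) (i+1) b) :
        ↑(P.complex.X (i+1)) × ↑(Q.complex.X (i+1)))
        = (prodCx M₁ M₂ P Q).d (i+2) (i+1) (0, b) := by
      refine Eq.trans ?_ (hd (0, b)).symm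
      show _ = (P.complex.d (i+2) (i+1) 0, Q.complex.d (i+2) (i+1) b)
      rw [map_zero]
    rw [this]; exact hφ' _)
  have hψ₁' : ∀ a, ψ₁ (P.complex.d (i+1) i a) = φ (a, 0) :=
    fun a => ConcreteCategory.congr_hom hψ₁ a
  have hψ₂' : ∀ b, ψ₂ (Q.complex.d (i+1) i b) = φ (0, b) :=
    fun b => ConcreteCategory.congr_hom hψ₂ b
  refine ⟨(ModuleCat.ofHom ((ψ₁.hom ∘ₗ LinearMap.fst R (P.complex.X i) (Q.complex.X i)
    + ψ₂.hom ∘ₗ LinearMap.snd R (P.complex.X i) (Q.complex.X i) : _ →ₗ[R] N)) :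
      (prodCx M₁ M₂ P Q).X i ⟶ N), ?_⟩
  apply ModuleCat.hom_ext; apply LinearMap.ext
  intro x
  show (fun y => ψ₁ y.1 + ψ₂ y.2) ((prodCx M₁ M₂ P Q).d (i+1) i x) = φ x
  refine (congrArg (fun y : ↑(P.complex.X i) × ↑(Q.complex.X i) => ψ₁ y.1 + ψ₂ y.2) (hd' x)).trans ?_
  show ψ₁ (P.complex.d (i+1) i x.1) + ψ₂ (Q.complex.d (i+1) i x.2) = φ x
  rw [hψ₁', hψ₂']; refine (map_add φ.hom (x.1, 0) (0, x.2)).symm.trans ?_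
  congr 1
  show ((x.1, 0) : ↑(P.complex.X (i+1)) × ↑(Q.complex.X (i+1))) + (0, x.2) = x
  exact Prod.ext (add_zero _) (zero_add _)

/-- in a short exact sequence `0 → X → Y → Z → 0`, if `X` and `Z` are
Gorenstein `ℬ`-modules, then so is `Y`. -/
theorem gorenstein_of_extension
    (𝒜 ℬ : Set (ModuleCat.{u} R)) (hcp : IsCotorsionPair R 𝒜 ℬ)
    (hher : IsHereditary R 𝒜 ℬ) (hcom : IsCompletePair R 𝒜 ℬ)
    {X Y Z : ModuleCat.{u} R} (f : X →ₗ[R] Y) (g : Y →ₗ[R] Z)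
    (hse : IsShortExact f g)
    (hX : IsGorenstein 𝒜 ℬ X) (hZ : IsGorenstein 𝒜 ℬ Z) :
    IsGorenstein 𝒜 ℬ Y := by
  obtain ⟨hf, hg, hfg⟩ := hse
  have hse' : IsShortExact f g := ⟨hf, hg, hfg⟩
  obtain ⟨hX1, P, dP, εP, hPmem, hPsurj, hPex0, hPex, hPhom⟩ := hX
  obtain ⟨hZ1, Q, dQ, εQ, hQmem, hQsurj, hQex0, hQex, hQhom⟩ := hZ
  have hPdd : ∀ n a, dP n (dP (n+1) a) = 0 := fun n a => (hPex n).apply_apply_eq_zero a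
  have hQdd : ∀ n b, dQ n (dQ (n+1) b) = 0 := fun n b => (hQex n).apply_apply_eq_zero b
  constructor
  · -- Ext vanishing for Y
    intro i hi L hL
    obtain ⟨j, rfl⟩ : ∃ j, i = j + 1 := ⟨i - 1, (Nat.succ_pred_eq_of_pos hi).symm⟩
    exact extVanishes_mid hse' j (hX1 (j+1) hi L hL) (hZ1 (j+1) hi L hL)
  · -- construction of the resolution of Y (horseshoe)
    -- the lift σ₀ of εQ along g
    obtain ⟨σ₀, hσ₀⟩ := lift_of_ext1 hse' (hX1 1 le_rfl (Q 0) (hQmem 0)) εQ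
    have hσ₀' : ∀ b, g (σ₀ b) = εQ b := fun b => DFunLike.congr_fun hσ₀ b
    -- membership of the products in 𝒜 ∩ ℬ
    have hWmem : ∀ n, ModuleCat.of R (↑(P n) × ↑(Q n)) ∈ 𝒜 ∩ ℬ := by
      intro n
      obtain ⟨hPA, hPB⟩ := hPmem n
      obtain ⟨hQA, hQB⟩ := hQmem n
      constructor
      · rw [hcp.mem_left]
        intro N hN
        exact extVanishes_prod_left (P n) (Q n) N 0 ((hcp.mem_left (P n)).1 hPA N hN)
          ((hcp.mem_left (Q n)).1 hQA N hN)
      · rw [hcp.mem_right]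
        intro M hM
        exact extVanishes_prod_right M (P n) (Q n) 0 ((hcp.mem_right (P n)).1 hPB M hM)
          ((hcp.mem_right (Q n)).1 hQB M hM)
    -- construction of τ₀
    obtain ⟨u0, hu0⟩ := exists_factor_of_range (R := R) f hf (σ₀ ∘ₗ dQ 0) (by
      intro b
      refine (hfg _).1 ?_
      show g (σ₀ (dQ 0 b)) = 0
      rw [hσ₀', hQex0.apply_apply_eq_zero])
    obtain ⟨τ0', hτ0'⟩ := (hPhom (Q 1) (hQmem 1)).1 u0
    have hbase : ∀ b, f (εP ((-τ0' : _ →ₗ[R] ↑(P 0)) b)) = -(σ₀ (dQ 0 b)) := by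
      intro b
      have h1 : εP ((-τ0' : _ →ₗ[R] ↑(P 0)) b) = -(u0 b) := by
        show εP (-(τ0' b)) = -(u0 b)
        rw [map_neg]
        exact congrArg Neg.neg (DFunLike.congr_fun hτ0' b)
      rw [h1, map_neg]
      exact congrArg Neg.neg (DFunLike.congr_fun hu0 b)
    -- construction of τ₁
    have ht1ex : ∃ t1 : ↑(Q 2) →ₗ[R] ↑(P 1),
        (dP 0) ∘ₗ t1 = -((-τ0' : _ →ₗ[R] ↑(P 0)) ∘ₗ dQ 1) := by
      have hker : εP ∘ₗ (-((-τ0' : _ →ₗ[R] ↑(P 0)) ∘ₗ dQ 1)) = 0 := by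
        apply LinearMap.ext
        intro b
        show εP (-((-τ0' : _ →ₗ[R] ↑(P 0)) (dQ 1 b))) = 0
        apply hf
        have : f (εP (-((-τ0' : _ →ₗ[R] ↑(P 0)) (dQ 1 b)))) = 0 := by
          rw [map_neg, map_neg, hbase, neg_neg, hQdd, map_zero]
        rw [this, map_zero]
      obtain ⟨t1, ht1⟩ := ((hPhom (Q 2) (hQmem 2)).2.1
        (-((-τ0' : _ →ₗ[R] ↑(P 0)) ∘ₗ dQ 1))).1 hker
      exact ⟨t1, ht1⟩
    obtain ⟨t1, ht1⟩ := ht1ex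
    -- the inductive step
    have hstep : ∀ n (t : ↑(Q (n+1)) →ₗ[R] ↑(P n)) (t' : ↑(Q (n+2)) →ₗ[R] ↑(P (n+1))),
        (dP n) ∘ₗ t' = -(t ∘ₗ dQ (n+1)) →
        ∃ t'' : ↑(Q (n+3)) →ₗ[R] ↑(P (n+2)), (dP (n+1)) ∘ₗ t'' = -(t' ∘ₗ dQ (n+2)) := by
      intro n t t' h
      have hker : (dP n) ∘ₗ (-(t' ∘ₗ dQ (n+2))) = 0 := by
        apply LinearMap.ext
        intro b
        show dP n (-(t' (dQ (n+2) b))) = 0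
        have h2 : dP n (t' (dQ (n+2) b)) = -(t (dQ (n+1) (dQ (n+2) b))) :=
          DFunLike.congr_fun h (dQ (n+2) b)
        rw [map_neg, h2, neg_neg, hQdd, map_zero]
      obtain ⟨t'', ht''⟩ := ((hPhom (Q (n+3)) (hQmem (n+3))).2.2 n
        (-(t' ∘ₗ dQ (n+2)))).1 hker
      exact ⟨t'', ht''⟩
    -- the sequence τ, by recursion
    have hτfact : ∃ τ : ∀ n, ↑(Q (n+1)) →ₗ[R] ↑(P n),
        (∀ b, f (εP (τ 0 b)) = -(σ₀ (dQ 0 b))) ∧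
        ∀ n, (dP n) ∘ₗ τ (n+1) = -(τ n ∘ₗ dQ (n+1)) := by
      let aux : ∀ n, Σ' (t : ↑(Q (n+1)) →ₗ[R] ↑(P n)) (t' : ↑(Q (n+2)) →ₗ[R] ↑(P (n+1))),
          (dP n) ∘ₗ t' = -(t ∘ₗ dQ (n+1)) :=
        fun n => Nat.rec ⟨(-τ0' : _ →ₗ[R] ↑(P 0)), t1, ht1⟩
          (fun m prev => ⟨prev.2.1, (hstep m prev.1 prev.2.1 prev.2.2).choose,
            (hstep m prev.1 prev.2.1 prev.2.2).choose_spec⟩) n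
      exact ⟨fun n => (aux n).1, hbase, fun n => (aux n).2.2⟩
    obtain ⟨τ, hτ0, hτ⟩ := hτfact
    have hτ' : ∀ n b, dP n (τ (n+1) b) = -(τ n (dQ (n+1) b)) :=
      fun n b => DFunLike.congr_fun (hτ n) b
    -- the resolution of Y
    refine ⟨fun n => ModuleCat.of R (↑(P n) × ↑(Q n)),
      fun n => LinearMap.prod ((dP n) ∘ₗ LinearMap.fst R ↑(P (n+1)) ↑(Q (n+1))
          + (τ n) ∘ₗ LinearMap.snd R ↑(P (n+1)) ↑(Q (n+1)))
        ((dQ n) ∘ₗ LinearMap.snd R ↑(P (n+1)) ↑(Q (n+1))),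
      f ∘ₗ εP ∘ₗ LinearMap.fst R ↑(P 0) ↑(Q 0) + σ₀ ∘ₗ LinearMap.snd R ↑(P 0) ↑(Q 0),
      hWmem, ?_, ?_, ?_, ?_⟩
    · -- surjectivity of εW
      intro y
      obtain ⟨b, hb⟩ := hQsurj (g y)
      have h1 : g (y - σ₀ b) = 0 := by rw [map_sub, hσ₀', hb, sub_self]
      obtain ⟨x, hx⟩ := (hfg _).1 h1
      obtain ⟨a, ha⟩ := hPsurj x
      refine ⟨(a, b), ?_⟩
      show f (εP a) + σ₀ b = y
      rw [ha, hx]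
      abel
    · -- exactness at degree 0
      intro ab
      constructor
      · intro hab
        have hab' : f (εP ab.1) + σ₀ ab.2 = 0 := hab
        have h2 : g (f (εP ab.1) + σ₀ ab.2) = g 0 := congrArg (fun y => g y) hab'
        rw [map_zero, map_add, hfg.apply_apply_eq_zero, zero_add, hσ₀'] at h2
        obtain ⟨b', hb'⟩ := (hQex0 ab.2).1 h2
        have h3 : εP (ab.1 - τ 0 b') = 0 := by
          apply hf
          have : f (εP (ab.1 - τ 0 b')) = 0 := by
            rw [map_sub, map_sub, hτ0, sub_neg_eq_add, hb', hab']
          rw [this, map_zero]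
        obtain ⟨a', ha'⟩ := (hPex0 _).1 h3
        refine ⟨(a', b'), ?_⟩
        show (dP 0 a' + τ 0 b', dQ 0 b') = ab
        rw [ha', hb']
        show (ab.1 - τ 0 b' + τ 0 b', ab.2) = ab
        have hcan : ab.1 - τ 0 b' + τ 0 b' = ab.1 := by abel
        rw [hcan]
      · rintro ⟨c, rfl⟩
        show f (εP (dP 0 c.1 + τ 0 c.2)) + σ₀ (dQ 0 c.2) = 0
        rw [map_add, map_add, hPex0.apply_apply_eq_zero, map_zero, zero_add, hτ0,
          neg_add_cancel]
    · -- exactness at higher degrees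
      intro n ab
      constructor
      · intro hab
        have hab1 : dP n ab.1 + τ n ab.2 = 0 := congrArg Prod.fst hab
        have hab2 : dQ n ab.2 = 0 := congrArg Prod.snd hab
        obtain ⟨b', hb'⟩ := (hQex n ab.2).1 hab2
        have h3 : dP n (ab.1 - τ (n+1) b') = 0 := by
          rw [map_sub, hτ' n, hb', sub_neg_eq_add, hab1]
        obtain ⟨a', ha'⟩ := (hPex n _).1 h3
        refine ⟨(a', b'), ?_⟩
        show (dP (n+1) a' + τ (n+1) b', dQ (n+1) b') = ab
        rw [ha', hb']
        show (ab.1 - τ (n+1) b' + τ (n+1) b', ab.2) = ab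
        have hcan : ab.1 - τ (n+1) b' + τ (n+1) b' = ab.1 := by abel
        rw [hcan]
      · rintro ⟨c, rfl⟩
        show (dP n (dP (n+1) c.1 + τ (n+1) c.2) + τ n (dQ (n+1) c.2),
          dQ n (dQ (n+1) c.2)) = 0
        rw [map_add, hPdd, zero_add, hτ' n, neg_add_cancel, hQdd]
        rfl
    · -- Hom(L, -) exactness
      intro L hL
      obtain ⟨hPsurjL, hPex0L, hPexL⟩ := hPhom L hL
      obtain ⟨hQsurjL, hQex0L, hQexL⟩ := hQhom L hL
      refine ⟨?_, ?_, ?_⟩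
      · -- surjectivity
        intro φ
        obtain ⟨β, hβ⟩ := hQsurjL (g ∘ₗ φ)
        have hβ' : ∀ l, εQ (β l) = g (φ l) := fun l => DFunLike.congr_fun hβ l
        obtain ⟨u, hu⟩ := exists_factor_of_range (R := R) f hf (φ - σ₀ ∘ₗ β) (by
          intro l
          refine (hfg _).1 ?_
          show g (φ l - σ₀ (β l)) = 0
          rw [map_sub, hσ₀', hβ', sub_self])
        have hu' : ∀ l, f (u l) = φ l - σ₀ (β l) := fun l => DFunLike.congr_fun hu l
        obtain ⟨α, hα⟩ := hPsurjL u
        have hα' : ∀ l, εP (α l) = u l := fun l => DFunLike.congr_fun hα l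
        refine ⟨LinearMap.prod α β, ?_⟩
        apply LinearMap.ext
        intro l
        show f (εP (α l)) + σ₀ (β l) = φ l
        rw [hα', hu']
        abel
      · -- Hom exactness at degree 0
        intro h
        constructor
        · intro hh
          have hh' : ∀ l, f (εP ((h l).1)) + σ₀ ((h l).2) = 0 :=
            fun l => DFunLike.congr_fun hh l
          have hQ0 : ∀ l, εQ ((h l).2) = 0 := by
            intro l
            have h2 : g (f (εP ((h l).1)) + σ₀ ((h l).2)) = g 0 :=
              congrArg (fun y => g y) (hh' l)
            rw [map_zero, map_add, hfg.apply_apply_eq_zero, zero_add, hσ₀'] at h2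
            exact h2
          obtain ⟨k₂, hk₂⟩ := (hQex0L (LinearMap.snd R ↑(P 0) ↑(Q 0) ∘ₗ h)).1 (by
            apply LinearMap.ext
            intro l
            exact hQ0 l)
          have hk₂' : ∀ l, dQ 0 (k₂ l) = (h l).2 := fun l => DFunLike.congr_fun hk₂ l
          obtain ⟨k₁, hk₁⟩ := (hPex0L
              (LinearMap.fst R ↑(P 0) ↑(Q 0) ∘ₗ h - τ 0 ∘ₗ k₂)).1 (by
            apply LinearMap.ext
            intro l
            show εP ((h l).1 - τ 0 (k₂ l)) = 0
            apply hf
            have : f (εP ((h l).1 - τ 0 (k₂ l))) = 0 := by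
              rw [map_sub, map_sub, hτ0, sub_neg_eq_add, hk₂', hh']
            rw [this, map_zero])
          have hk₁' : ∀ l, dP 0 (k₁ l) = (h l).1 - τ 0 (k₂ l) :=
            fun l => DFunLike.congr_fun hk₁ l
          refine ⟨LinearMap.prod k₁ k₂, ?_⟩
          apply LinearMap.ext
          intro l
          show (dP 0 (k₁ l) + τ 0 (k₂ l), dQ 0 (k₂ l)) = h l
          rw [hk₁', hk₂']
          show ((h l).1 - τ 0 (k₂ l) + τ 0 (k₂ l), (h l).2) = h l
          have hcan : (h l).1 - τ 0 (k₂ l) + τ 0 (k₂ l) = (h l).1 := by abel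
          rw [hcan]
        · rintro ⟨k, rfl⟩
          apply LinearMap.ext
          intro l
          show f (εP (dP 0 ((k l).1) + τ 0 ((k l).2))) + σ₀ (dQ 0 ((k l).2)) = 0
          rw [map_add, map_add, hPex0.apply_apply_eq_zero, map_zero, zero_add, hτ0,
            neg_add_cancel]
      · -- Hom exactness at higher degrees
        intro n h
        constructor
        · intro hh
          have hh1 : ∀ l, dP n ((h l).1) + τ n ((h l).2) = 0 :=
            fun l => congrArg Prod.fst (DFunLike.congr_fun hh l)
          have hh2 : ∀ l, dQ n ((h l).2) = 0 :=
            fun l => congrArg Prod.snd (DFunLike.congr_fun hh l)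
          obtain ⟨k₂, hk₂⟩ := (hQexL n (LinearMap.snd R ↑(P (n+1)) ↑(Q (n+1)) ∘ₗ h)).1 (by
            apply LinearMap.ext
            intro l
            exact hh2 l)
          have hk₂' : ∀ l, dQ (n+1) (k₂ l) = (h l).2 := fun l => DFunLike.congr_fun hk₂ l
          obtain ⟨k₁, hk₁⟩ := (hPexL n
              (LinearMap.fst R ↑(P (n+1)) ↑(Q (n+1)) ∘ₗ h - τ (n+1) ∘ₗ k₂)).1 (by
            apply LinearMap.ext
            intro l
            show dP n ((h l).1 - τ (n+1) (k₂ l)) = 0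
            rw [map_sub, hτ' n, hk₂', sub_neg_eq_add, hh1])
          have hk₁' : ∀ l, dP (n+1) (k₁ l) = (h l).1 - τ (n+1) (k₂ l) :=
            fun l => DFunLike.congr_fun hk₁ l
          refine ⟨LinearMap.prod k₁ k₂, ?_⟩
          apply LinearMap.ext
          intro l
          show (dP (n+1) (k₁ l) + τ (n+1) (k₂ l), dQ (n+1) (k₂ l)) = h l
          rw [hk₁', hk₂']
          show ((h l).1 - τ (n+1) (k₂ l) + τ (n+1) (k₂ l), (h l).2) = h l
          have hcan : (h l).1 - τ (n+1) (k₂ l) + τ (n+1) (k₂ l) = (h l).1 := by abel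
          rw [hcan]
        · rintro ⟨k, rfl⟩
          apply LinearMap.ext
          intro l
          show (dP n (dP (n+1) ((k l).1) + τ (n+1) ((k l).2)) + τ n (dQ (n+1) ((k l).2)),
            dQ n (dQ (n+1) ((k l).2))) = 0
          rw [map_add, hPdd, zero_add, hτ' n, neg_add_cancel, hQdd]
          rfl
end
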